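/- Let B ⊂ F be nonempty subsets of E with F ≠ E, and set G = (F∖B) ∪ {𝔡}. Then the trace on G of the chain collapsed at B has the same jump rates as the collapse at B of the trace on F: R_{TC}(u,v) = R_{CT}(u,v) for all u ≠ v in G. In particular, for every η ∈ F∖B, R_{TC}(𝔡, η) = μ(B)^{-1} Σ_{ζ∈B} μ(ζ) λ(ζ) P_ζ[ℍ⁺_F < ∞ and Y_{ℍ⁺_F} = η] = R_{CT}(𝔡, η); hence the two processes have the same law. -/

import Mathlib

open scoped Classical
open Filter Topology

noncomputable section

/-- The weight of the discrete-time path `γ` (consisting of `n` steps) under the transition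
kernel `p`: the probability that the chain started at `γ 0` follows exactly this path. -/
def pathWeight {E : Type*} (p : E → E → ℝ) {n : ℕ} (γ : Fin (n + 1) → E) : ℝ :=
  ∏ i : Fin n, p (γ i.castSucc) (γ i.succ)

/-- `retProb p η S T` is the probability that the chain with transition kernel `p` started at
`η` enters the set `S` at some positive time, and does so for the first time at a state
belonging to `T`.  For `T ⊆ S` this is `P_η[ℍ⁺_S < ∞ and Y_{ℍ⁺_S} ∈ T]`; for disjoint sets
`A`, `B`, taking `S = A ∪ B`, `T = B` gives `P_η[ℍ⁺_B < ℍ⁺_A]`.  It is written as a sum over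
all finite paths. -/
def retProb {E : Type*} (p : E → E → ℝ) (η : E) (S T : Set E) : ℝ :=
  ∑' x : Σ n : ℕ, Fin (n + 2) → E,
    if x.2 0 = η ∧ (∀ j : Fin (x.1 + 2), 0 < (j : ℕ) → (j : ℕ) < x.1 + 1 → x.2 j ∉ S) ∧
        x.2 (Fin.last (x.1 + 1)) ∈ T
      then pathWeight p x.2 else 0

/-- `hitProb p η A B = P_η[ℍ_A < ℍ_B]`: the probability that the chain with kernel `p`
started at `η` hits `A` (a hit at time `0` being allowed) strictly before hitting `B`,
written as a sum over all finite paths which stay outside `A ∪ B` before ending in `A`. -/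
def hitProb {E : Type*} (p : E → E → ℝ) (η : E) (A B : Set E) : ℝ :=
  ∑' x : Σ n : ℕ, Fin (n + 1) → E,
    if x.2 0 = η ∧ (∀ j : Fin (x.1 + 1), (j : ℕ) < x.1 → x.2 j ∉ A ∪ B) ∧
        x.2 (Fin.last x.1) ∈ A
      then pathWeight p x.2 else 0

/-- The capacity `Cap(A,B) = Σ_{η ∈ A} M(η) P_η[ℍ⁺_B < ℍ⁺_A]` between two disjoint sets,
for the chain with jump kernel `p` and invariant measure `M` of the jump chain. -/
def cap {E : Type*} (p : E → E → ℝ) (M : E → ℝ) (A B : Set E) : ℝ :=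
  ∑' η : A, M η.1 * retProb p η.1 (A ∪ B) B

/-- The jump probabilities `p(η,ξ) = R(η,ξ)/λ(η)`, `λ(η) = -R(η,η)`, of a rate matrix `R`. -/
def jumpProb {E : Type*} (R : E → E → ℝ) (η ξ : E) : ℝ :=
  if η = ξ then 0 else R η ξ / (-R η η)

/-- Irreducibility of a discrete-time chain: any two states are joined by a path of
positive probability. -/
def MCIrreducible {E : Type*} (p : E → E → ℝ) : Prop :=
  ∀ η ξ : E, ∃ (n : ℕ) (γ : Fin (n + 1) → E),
    γ 0 = η ∧ γ (Fin.last n) = ξ ∧ 0 < pathWeight p γ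

/-- `R` is a rate matrix: nonnegative off-diagonal entries, finite strictly positive holding
rates `λ(η) = -R(η,η)`, and rows summing to zero. -/
structure IsRateMatrix {E : Type*} (R : E → E → ℝ) : Prop where
  offdiag_nonneg : ∀ η ξ, η ≠ ξ → 0 ≤ R η ξ
  diag_neg : ∀ η, R η η < 0
  row_summable : ∀ η, Summable (R η)
  row_sum : ∀ η, ∑' ξ, R η ξ = 0

/-- `μ` is a stationary probability measure for the rate matrix `R`, charging every point,
with summable holding rates:  `Σ_η λ(η) μ(η) < ∞`. -/
structure IsStationaryRate {E : Type*} (R : E → E → ℝ) (μ : E → ℝ) : Prop where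
  pos : ∀ η, 0 < μ η
  summable : Summable μ
  total : ∑' η, μ η = 1
  flux_summable : ∀ ξ, Summable fun η => μ η * R η ξ
  stat : ∀ ξ, ∑' η, μ η * R η ξ = 0
  lam_summable : Summable fun η => -R η η * μ η

/-- The adjoint rates `R*(η,ξ) = μ(ξ) R(ξ,η) / μ(η)` (same holding rates). -/
def adjRate {E : Type*} (R : E → E → ℝ) (μ : E → ℝ) (η ξ : E) : ℝ :=
  if η = ξ then R η η else μ ξ * R ξ η / μ η

/-- The rates of the chain collapsed at `B`: the state space is `(E ∖ B) ∪ {𝔡}`, modelled as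
`Option {η : E // η ∉ B}` with `none` playing the role of the collapsed point `𝔡`.
The diagonal entries are minus the holding rates. -/
def collapsedRate {E : Type*} (R : E → E → ℝ) (μ : E → ℝ) (B : Set E) :
    Option {η : E // η ∉ B} → Option {η : E // η ∉ B} → ℝ
  | some ξ, some ζ => R ξ.1 ζ.1
  | some ξ, none => ∑' ζ : B, R ξ.1 ζ.1
  | none, some ζ => (∑' ζ₀ : B, μ ζ₀.1)⁻¹ * ∑' ζ₀ : B, μ ζ₀.1 * R ζ₀.1 ζ.1
  | none, none =>
      -((∑' ζ₀ : B, μ ζ₀.1)⁻¹ *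
        ∑' ζ₀ : B, ∑' ξ : {η : E // η ∉ B}, μ ζ₀.1 * R ζ₀.1 ξ.1)

/-- The subset of the collapsed state space corresponding to `A ⊆ E ∖ B`. -/
def collapsedSet {E : Type*} (B A : Set E) : Set (Option {η : E // η ∉ B}) :=
  {z | ∃ η : {η : E // η ∉ B}, z = some η ∧ η.1 ∈ A}

/-- The jump rates of the trace on `F` of the chain with rates `R`:
`R_T(η,ξ) = λ(η) P_η[ℍ⁺_F < ∞ and Y_{ℍ⁺_F} = ξ]`. -/
def traceRate {E : Type*} (R : E → E → ℝ) (F : Set E) (η ξ : E) : ℝ :=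
  -R η η * retProb (jumpProb R) η F {ξ}

/-- `R_{TC}`: the jump rates of the trace on `G = (F∖B) ∪ {𝔡}` of the chain collapsed
at `B`. -/
def traceOfCollapsedRate {E : Type*} (R : E → E → ℝ) (μ : E → ℝ) (B F : Set E)
    (u v : Option {η : E // η ∉ B}) : ℝ :=
  -collapsedRate R μ B u u *
    retProb (jumpProb (collapsedRate R μ B)) u (insert none (collapsedSet B F)) {v}

/-- `R_{CT}`: the jump rates obtained by collapsing the set `B` in the trace chain
on `F`. -/
def collapsedTraceRate {E : Type*} (R : E → E → ℝ) (μ : E → ℝ) (B F : Set E) :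
    Option {η : E // η ∉ B} → Option {η : E // η ∉ B} → ℝ
  | some ξ, some ζ => traceRate R F ξ.1 ζ.1
  | some ξ, none => ∑' ζ : B, traceRate R F ξ.1 ζ.1
  | none, some ζ => (∑' ζ₀ : B, μ ζ₀.1)⁻¹ * ∑' ζ₀ : B, μ ζ₀.1 * traceRate R F ζ₀.1 ζ.1
  | none, none => 0

/-!
A first-entrance probability is a sum, over the list of states visited strictly between the
start and the entrance, of products of jump probabilities (`firstEntrance`). For the trace on
`F` and for the trace on `(F ∖ B) ∪ {𝔡}` of the collapsed chain the admissible intermediate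
lists are the same, namely lists of states outside `F` (hence outside `B ⊆ F`), and along them
the collapsed chain jumps exactly as the original one. Only the jumps into or out of `𝔡` differ,
and they are sums over `B`: `p(ξ, 𝔡) = Σ_{ζ ∈ B} p(ξ, ζ)` and
`λ(𝔡) p(𝔡, η) = μ(B)⁻¹ Σ_{ζ ∈ B} μ(ζ) λ(ζ) p(ζ, η)`. Summing over lists in `ℝ≥0∞`, where sums
commute freely, gives the identities of rates; first-entrance probabilities are at most `1`,
which allows the passage back to real numbers.
-/

open ENNReal Function

section Paths

variable {α : Type*}

def chainWeight (q : α → α → ℝ≥0∞) : α → List α → α → ℝ≥0∞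
  | a, [], b => q a b
  | a, c :: l, b => q a c * chainWeight q c l b

def firstEntrance (q : α → α → ℝ≥0∞) (η : α) (S : Set α) (v : α) : ℝ≥0∞ :=
  ∑' l : List α, if ∀ c ∈ l, c ∉ S then chainWeight q η l v else 0

lemma pathWeight_cons (p : α → α → ℝ) {n : ℕ} (a : α) (γ : Fin (n + 1) → α) :
    pathWeight p (Fin.cons a γ : Fin (n + 2) → α) = p a (γ 0) * pathWeight p γ := by
  simp only [pathWeight, Fin.prod_univ_succ, Fin.cons_zero, Fin.cons_succ,
    ← Fin.succ_castSucc, Fin.castSucc_zero]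

lemma ofReal_pathWeight_cons_snoc {p : α → α → ℝ} (hp : ∀ a b, 0 ≤ p a b) {n : ℕ}
    (a : α) (w : Fin n → α) (b : α) :
    ENNReal.ofReal (pathWeight p (Fin.cons a (Fin.snoc w b) : Fin (n + 2) → α)) =
      chainWeight (fun x y => ENNReal.ofReal (p x y)) a (List.ofFn w) b := by
  induction n generalizing a with
  | zero => simp [pathWeight, chainWeight, Fin.snoc]
  | succ n ih =>
    rw [← Fin.cons_self_tail w, ← Fin.cons_snoc_eq_snoc_cons, pathWeight_cons,
      ENNReal.ofReal_mul (hp _ _), ih, List.ofFn_succ]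
    rfl

lemma cons_snoc_retProb_condition_iff {n : ℕ} (η : α) (S : Set α) (w : Fin n → α) (v : α) :
    ((Fin.cons η (Fin.snoc w v) : Fin (n + 2) → α) 0 = η ∧
      (∀ j : Fin (n + 2), 0 < (j : ℕ) → (j : ℕ) < n + 1 →
        (Fin.cons η (Fin.snoc w v) : Fin (n + 2) → α) j ∉ S) ∧
      (Fin.cons η (Fin.snoc w v) : Fin (n + 2) → α) (Fin.last (n + 1)) ∈ ({v} : Set α)) ↔
      ∀ i, w i ∉ S := by
  refine ⟨fun ⟨_, h, _⟩ i => by simpa using h i.castSucc.succ (by simp) (by simp), fun h => ?_⟩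
  refine ⟨rfl, fun j hj0 hj1 => ?_, by simp⟩
  cases j using Fin.cases with
  | zero => simp at hj0
  | succ k =>
    cases k using Fin.lastCases with
    | last => simp at hj1
    | cast i => simpa using h i

lemma retProb_singleton {p : α → α → ℝ} (hp : ∀ a b, 0 ≤ p a b) (η : α) (S : Set α) (v : α) :
    retProb p η S {v} = (firstEntrance (fun x y => ENNReal.ofReal (p x y)) η S v).toReal := by
  have tsum_eq_toReal : ∀ {ι : Type _} (f : ι → ℝ), (∀ i, 0 ≤ f i) →
      ∑' i, f i = (∑' i, ENNReal.ofReal (f i)).toReal := fun f hf => by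
    rw [ENNReal.tsum_toReal_eq fun _ => ofReal_ne_top]
    simp [hf]
  rw [retProb, tsum_eq_toReal _ fun x => by
    split_ifs
    exacts [Finset.prod_nonneg fun i _ => hp _ _, le_rfl]]
  congr 1
  rw [ENNReal.tsum_sigma', firstEntrance, ← List.equivSigmaTuple.symm.tsum_eq, ENNReal.tsum_sigma']
  refine tsum_congr fun n => ?_
  rw [← (Fin.cons_right_injective η).comp (Fin.snoc_left_injective v) |>.tsum_eq]
  · refine tsum_congr fun w => ?_
    simp only [comp_apply, List.equivSigmaTuple_symm_apply, List.forall_mem_ofFn_iff]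
    rw [← ofReal_pathWeight_cons_snoc hp, apply_ite ENNReal.ofReal, ENNReal.ofReal_zero]
    exact if_congr (cons_snoc_retProb_condition_iff η S w v) rfl rfl
  · intro γ hγ
    obtain ⟨⟨h0, -, hlast⟩, -⟩ := ite_ne_right_iff.1 (ENNReal.ofReal_ne_zero_iff.1 hγ).ne'
    refine ⟨Fin.init (Fin.tail γ), ?_⟩
    conv_rhs => rw [← Fin.cons_self_tail γ, ← Fin.snoc_init_self (Fin.tail γ)]
    simpa [Fin.tail] using ⟨h0.symm, hlast.symm⟩

lemma tsum_list_eq_add_tsum_cons (f : List α → ℝ≥0∞) :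
    ∑' l, f l = f [] + ∑' (c : α) (l : List α), f (c :: l) := by
  have hcons : Injective fun x : α × List α => x.1 :: x.2 := fun x y h => by
    simpa [Prod.ext_iff] using h
  have hsupp : (support fun l => if l = [] then 0 else f l) ⊆
      Set.range fun x : α × List α => x.1 :: x.2 := by
    intro l hl
    cases l with
    | nil => simp at hl
    | cons c l => exact ⟨(c, l), rfl⟩
  rw [ENNReal.tsum_eq_add_tsum_ite [], ← ENNReal.tsum_prod]
  convert congrArg (f [] + ·) (hcons.tsum_eq hsupp).symm using 2
  · exact tsum_congr fun l => by split_ifs <;> rfl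
  · simp

lemma tsum_chainWeight_length_lt_le_one {q : α → α → ℝ≥0∞} (hq : ∀ a, ∑' b, q a b ≤ 1)
    {S : Set α} {v : α} (hv : v ∈ S) (N : ℕ) (η : α) :
    ∑' l : List α, (if l.length < N ∧ ∀ c ∈ l, c ∉ S then chainWeight q η l v else 0) ≤ 1 := by
  induction N generalizing η with
  | zero => simp
  | succ N ih =>
    rw [tsum_list_eq_add_tsum_cons]
    calc _ = q η v + ∑' c, if c ∉ S then q η c * ∑' l : List α,
            (if l.length < N ∧ ∀ c ∈ l, c ∉ S then chainWeight q c l v else 0) else 0 := by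
          have hnil : (if ([] : List α).length < N + 1 ∧ ∀ c ∈ ([] : List α), c ∉ S
              then chainWeight q η [] v else 0) = q η v := by simp [chainWeight]
          rw [hnil]
          congr 1
          refine tsum_congr fun c => ?_
          by_cases hc : c ∈ S
          · simp [hc]
          · simp only [hc, not_false_eq_true, if_true, ← ENNReal.tsum_mul_left]
            refine tsum_congr fun l => ?_
            simp [chainWeight, hc]
      _ ≤ q η v + ∑' c, if c ∉ S then q η c else 0 := by
          gcongr with c
          by_cases hc : c ∈ S
          · simp [hc]
          · simpa [hc] using mul_le_of_le_one_right' (ih c)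
      _ = ∑' c, ((if c = v then q η c else 0) + if c ∉ S then q η c else 0) := by
          rw [ENNReal.tsum_add, tsum_ite_eq]
      _ ≤ ∑' c, q η c := ENNReal.tsum_le_tsum fun c => by
          by_cases hc : c = v
          · simp [hc, hv]
          · simp only [hc, if_false, zero_add]
            split_ifs <;> simp
      _ ≤ 1 := hq η

lemma firstEntrance_le_one {q : α → α → ℝ≥0∞} (hq : ∀ a, ∑' b, q a b ≤ 1) {S : Set α} {v : α}
    (hv : v ∈ S) (η : α) : firstEntrance q η S v ≤ 1 := by
  rw [firstEntrance, ENNReal.tsum_eq_iSup_sum]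
  refine iSup_le fun s => ?_
  calc _ = ∑ l ∈ s, (if l.length < s.sup List.length + 1 ∧ ∀ c ∈ l, c ∉ S
          then chainWeight q η l v else 0) :=
        Finset.sum_congr rfl fun l hl => by
          simp [Nat.lt_succ_of_le (Finset.le_sup (f := List.length) hl)]
    _ ≤ _ := ENNReal.sum_le_tsum s
    _ ≤ 1 := tsum_chainWeight_length_lt_le_one hq hv _ η

/- The decidability instance is implicit so that rewriting reuses the one found in the goal. -/
lemma tsum_ite_forall_mem_map {β : Type*} {κ : β → α} (hκ : Injective κ) {P : α → Prop}
    {_ : DecidablePred P} (hP : ∀ a, P a → a ∈ Set.range κ) (f : List α → ℝ≥0∞) :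
    ∑' l : List α, (if ∀ c ∈ l, P c then f l else 0) =
      ∑' l : List β, if ∀ c ∈ l, P (κ c) then f (l.map κ) else 0 := by
  rw [← (List.map_injective_iff.2 hκ).tsum_eq]
  · simp
  · intro l hl
    rw [Set.range_list_map]
    exact fun c hc => hP c ((ite_ne_right_iff.1 hl).1 c hc)

end Paths

section RateMatrix

variable {α : Type*}

def jumpKernel (C : α → α → ℝ) (a b : α) : ℝ≥0∞ := ENNReal.ofReal (jumpProb C a b)

variable {C : α → α → ℝ}

lemma jumpProb_nonneg_of (hoff : ∀ u v, u ≠ v → 0 ≤ C u v) (hdiag : ∀ u, C u u ≤ 0)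
    (u v : α) : 0 ≤ jumpProb C u v := by
  unfold jumpProb
  split_ifs with h
  exacts [le_rfl, div_nonneg (hoff u v h) (neg_nonneg.2 (hdiag u))]

/- When `-C u u = 0` the bound forces `C u v = 0`, so the identity survives the junk
division by zero. -/
lemma neg_mul_jumpProb_of_le {u v : α} (huv : u ≠ v) (h0 : 0 ≤ C u v) (hle : C u v ≤ -C u u) :
    -C u u * jumpProb C u v = C u v := by
  rw [jumpProb, if_neg huv]
  rcases (h0.trans hle).eq_or_lt with h | h
  · rw [← h, zero_mul]
    linarith
  · have : C u u ≠ 0 := by linarith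
    field_simp

end RateMatrix

namespace IsRateMatrix

variable {E : Type*} {R : E → E → ℝ}

lemma jumpProb_nonneg (hR : IsRateMatrix R) (a b : E) : 0 ≤ jumpProb R a b :=
  jumpProb_nonneg_of hR.offdiag_nonneg (fun u => (hR.diag_neg u).le) a b

lemma retProb_singleton (hR : IsRateMatrix R) (η : E) (S : Set E) (v : E) :
    retProb (jumpProb R) η S {v} = (firstEntrance (jumpKernel R) η S v).toReal :=
  _root_.retProb_singleton hR.jumpProb_nonneg η S v

lemma neg_mul_jumpProb (hR : IsRateMatrix R) {a b : E} (hab : a ≠ b) :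
    -R a a * jumpProb R a b = R a b := by
  have := (hR.diag_neg a).ne
  rw [jumpProb, if_neg hab]
  field_simp

lemma hasSum_update_self (hR : IsRateMatrix R) (a : E) : HasSum (update (R a) a 0) (-R a a) := by
  simpa [hR.row_sum a] using (hR.row_summable a).hasSum.update a 0

lemma hasSum_jumpProb (hR : IsRateMatrix R) (a : E) : HasSum (jumpProb R a) 1 := by
  have h : jumpProb R a = fun b => update (R a) a 0 b / -R a a := by
    funext b
    by_cases hb : b = a
    · simp [jumpProb, hb]
    · simp [jumpProb, hb, Ne.symm hb]
  rw [h, ← div_self (neg_pos.2 (hR.diag_neg a)).ne']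
  exact (hR.hasSum_update_self a).div_const _

lemma tsum_jumpKernel (hR : IsRateMatrix R) (a : E) : ∑' b, jumpKernel R a b = 1 := by
  rw [← ENNReal.ofReal_one, ← (hR.hasSum_jumpProb a).tsum_eq,
    ENNReal.ofReal_tsum_of_nonneg (hR.jumpProb_nonneg a) (hR.hasSum_jumpProb a).summable]
  rfl

lemma firstEntrance_ne_top (hR : IsRateMatrix R) {S : Set E} {v : E} (hv : v ∈ S) (η : E) :
    firstEntrance (jumpKernel R) η S v ≠ ∞ :=
  ne_top_of_le_ne_top one_ne_top (firstEntrance_le_one (fun a => (hR.tsum_jumpKernel a).le) hv η)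

lemma tsum_subtype_le (hR : IsRateMatrix R) {s : Set E} {a : E} (ha : a ∉ s) :
    ∑' b : s, R a b ≤ -R a a := by
  rw [← (hR.hasSum_update_self a).tsum_eq, tsum_subtype]
  refine Summable.tsum_le_tsum (fun b => ?_) ((hR.row_summable a).indicator s)
    (hR.hasSum_update_self a).summable
  by_cases hb : b ∈ s
  · rw [Set.indicator_of_mem hb, update_of_ne (ne_of_mem_of_not_mem hb ha)]
  · rw [Set.indicator_of_notMem hb]
    by_cases hba : b = a
    · simp [hba]
    · rw [update_of_ne hba]
      exact hR.offdiag_nonneg _ _ (Ne.symm hba)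

end IsRateMatrix

namespace IsStationaryRate

variable {E : Type*} {R : E → E → ℝ} {μ : E → ℝ}

lemma mul_rate_nonneg (hμ : IsStationaryRate R μ) (hR : IsRateMatrix R) {a b : E} (hab : a ≠ b) :
    0 ≤ μ a * R a b :=
  mul_nonneg (hμ.pos a).le (hR.offdiag_nonneg a b hab)

lemma inv_tsum_subtype_nonneg (hμ : IsStationaryRate R μ) (B : Set E) : 0 ≤ (∑' ζ : B, μ ζ)⁻¹ :=
  inv_nonneg.2 (tsum_nonneg fun ζ => (hμ.pos ζ).le)

end IsStationaryRate

section Collapsed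

variable {E : Type*} {R : E → E → ℝ} {μ : E → ℝ} {B F : Set E}

lemma some_mem_insert_none_collapsedSet {a : {η : E // η ∉ B}} :
    some a ∈ insert none (collapsedSet B F) ↔ a.1 ∈ F := by
  simp only [Set.mem_insert_iff, reduceCtorEq, false_or, collapsedSet, Set.mem_ofPred_eq,
    Option.some_inj]
  exact ⟨fun ⟨b, hab, hb⟩ => hab ▸ hb, fun h => ⟨a, rfl, h⟩⟩

lemma collapsedRate_nonneg (hR : IsRateMatrix R) (hμ : IsStationaryRate R μ)
    {u v : Option {η : E // η ∉ B}} (huv : u ≠ v) : 0 ≤ collapsedRate R μ B u v := by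
  rcases u with _ | a <;> rcases v with _ | b
  · exact absurd rfl huv
  · exact mul_nonneg (hμ.inv_tsum_subtype_nonneg B)
      (tsum_nonneg fun ζ => hμ.mul_rate_nonneg hR (ne_of_mem_of_not_mem ζ.2 b.2))
  · exact tsum_nonneg fun ζ => hR.offdiag_nonneg _ _ (ne_of_mem_of_not_mem ζ.2 a.2).symm
  · exact hR.offdiag_nonneg _ _ fun h => huv (congrArg some (Subtype.ext h))

lemma collapsedRate_diag_nonpos (hR : IsRateMatrix R) (hμ : IsStationaryRate R μ)
    (u : Option {η : E // η ∉ B}) : collapsedRate R μ B u u ≤ 0 := by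
  rcases u with _ | a
  · exact neg_nonpos.2 (mul_nonneg (hμ.inv_tsum_subtype_nonneg B) (tsum_nonneg fun ζ =>
      tsum_nonneg fun ξ => hμ.mul_rate_nonneg hR (ne_of_mem_of_not_mem ζ.2 ξ.2)))
  · exact (hR.diag_neg a).le

lemma collapsedRate_none_some_le (hR : IsRateMatrix R) (hμ : IsStationaryRate R μ)
    (a : {η : E // η ∉ B}) :
    collapsedRate R μ B none (some a) ≤ -collapsedRate R μ B none none := by
  simp only [collapsedRate, neg_neg]
  refine mul_le_mul_of_nonneg_left ?_ (hμ.inv_tsum_subtype_nonneg B)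
  have hrow : ∀ ζ : B, Summable fun ξ : {η : E // η ∉ B} => μ ζ * R ζ ξ :=
    fun ζ => ((hR.row_summable ζ).mul_left (μ ζ)).subtype _
  have hexit : Summable fun ζ : B => ∑' ξ : {η : E // η ∉ B}, μ ζ * R ζ ξ := by
    refine Summable.of_nonneg_of_le
      (fun ζ => tsum_nonneg fun ξ => hμ.mul_rate_nonneg hR (ne_of_mem_of_not_mem ζ.2 ξ.2))
      (fun ζ => ?_) ((hμ.lam_summable.subtype B).congr fun ζ => mul_comm _ _)
    rw [tsum_mul_left]
    exact mul_le_mul_of_nonneg_left (hR.tsum_subtype_le (s := Bᶜ) (not_not.2 ζ.2)) (hμ.pos ζ).le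
  refine Summable.tsum_le_tsum (fun ζ => ?_) ((hμ.flux_summable a).subtype B) hexit
  exact (hrow ζ).le_tsum a fun ξ _ => hμ.mul_rate_nonneg hR (ne_of_mem_of_not_mem ζ.2 ξ.2)

lemma jumpKernel_collapsedRate_some_some (a b : {η : E // η ∉ B}) :
    jumpKernel (collapsedRate R μ B) (some a) (some b) = jumpKernel R a b := by
  simp [jumpKernel, jumpProb, collapsedRate, Subtype.ext_iff]

lemma jumpKernel_collapsedRate_some_none (hR : IsRateMatrix R) (a : {η : E // η ∉ B}) :
    jumpKernel (collapsedRate R μ B) (some a) none = ∑' ζ : B, jumpKernel R a ζ := by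
  have hne : ∀ ζ : B, a.1 ≠ ζ := fun ζ => (ne_of_mem_of_not_mem ζ.2 a.2).symm
  simp only [jumpKernel, jumpProb, collapsedRate, reduceCtorEq, if_false, if_neg (hne _)]
  rw [← ENNReal.ofReal_tsum_of_nonneg
    (fun ζ => div_nonneg (hR.offdiag_nonneg _ _ (hne ζ)) (neg_nonneg.2 (hR.diag_neg a).le))
    (((hR.row_summable a).subtype B).div_const _), tsum_div_const]

lemma ofReal_mul_jumpKernel_collapsedRate_none_some (hR : IsRateMatrix R)
    (hμ : IsStationaryRate R μ) (a : {η : E // η ∉ B}) :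
    ENNReal.ofReal (-collapsedRate R μ B none none) * jumpKernel (collapsedRate R μ B) none (some a)
      = ENNReal.ofReal (∑' ζ : B, μ ζ)⁻¹ *
          ∑' ζ : B, ENNReal.ofReal (μ ζ * -R ζ ζ) * jumpKernel R ζ a := by
  have hne : ∀ ζ : B, ζ.1 ≠ a := fun ζ => ne_of_mem_of_not_mem ζ.2 a.2
  rw [jumpKernel, ← ENNReal.ofReal_mul (neg_nonneg.2 (collapsedRate_diag_nonpos hR hμ none)),
    neg_mul_jumpProb_of_le (by simp) (collapsedRate_nonneg hR hμ (by simp))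
      (collapsedRate_none_some_le hR hμ a), collapsedRate,
    ENNReal.ofReal_mul (hμ.inv_tsum_subtype_nonneg B),
    ENNReal.ofReal_tsum_of_nonneg (fun ζ => hμ.mul_rate_nonneg hR (hne ζ))
      ((hμ.flux_summable a).subtype B)]
  congr 1
  refine tsum_congr fun ζ => ?_
  rw [jumpKernel, ← ENNReal.ofReal_mul (mul_nonneg (hμ.pos ζ).le (neg_nonneg.2 (hR.diag_neg ζ).le)),
    mul_assoc, hR.neg_mul_jumpProb (hne ζ)]

lemma chainWeight_collapsedRate_some_some (l : List {η : E // η ∉ B}) (a b : {η : E // η ∉ B}) :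
    chainWeight (jumpKernel (collapsedRate R μ B)) (some a) (l.map some) (some b) =
      chainWeight (jumpKernel R) a (l.map Subtype.val) b := by
  induction l generalizing a with
  | nil => exact jumpKernel_collapsedRate_some_some a b
  | cons c l ih => simp only [List.map_cons, chainWeight, ih, jumpKernel_collapsedRate_some_some]

lemma chainWeight_collapsedRate_some_none (hR : IsRateMatrix R) (l : List {η : E // η ∉ B})
    (a : {η : E // η ∉ B}) :
    chainWeight (jumpKernel (collapsedRate R μ B)) (some a) (l.map some) none =
      ∑' ζ : B, chainWeight (jumpKernel R) a (l.map Subtype.val) ζ := by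
  induction l generalizing a with
  | nil => exact jumpKernel_collapsedRate_some_none hR a
  | cons c l ih =>
    simp only [List.map_cons, chainWeight, ih, jumpKernel_collapsedRate_some_some,
      ENNReal.tsum_mul_left]

lemma ofReal_mul_chainWeight_collapsedRate_none_some (hR : IsRateMatrix R)
    (hμ : IsStationaryRate R μ) (l : List {η : E // η ∉ B}) (b : {η : E // η ∉ B}) :
    ENNReal.ofReal (-collapsedRate R μ B none none) *
        chainWeight (jumpKernel (collapsedRate R μ B)) none (l.map some) (some b)
      = ENNReal.ofReal (∑' ζ : B, μ ζ)⁻¹ * ∑' ζ : B,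
          ENNReal.ofReal (μ ζ * -R ζ ζ) * chainWeight (jumpKernel R) ζ (l.map Subtype.val) b := by
  cases l with
  | nil => exact ofReal_mul_jumpKernel_collapsedRate_none_some hR hμ b
  | cons c l =>
    simp only [List.map_cons, chainWeight, ← mul_assoc,
      ofReal_mul_jumpKernel_collapsedRate_none_some hR hμ c,
      chainWeight_collapsedRate_some_some, ENNReal.tsum_mul_right]

lemma firstEntrance_collapsedSet (k : Option {η : E // η ∉ B} → Option {η : E // η ∉ B} → ℝ≥0∞)
    (u w : Option {η : E // η ∉ B}) :
    firstEntrance k u (insert none (collapsedSet B F)) w =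
      ∑' l : List {η : E // η ∉ B},
        if ∀ c ∈ l, c.1 ∉ F then chainWeight k u (l.map some) w else 0 := by
  rw [firstEntrance, tsum_ite_forall_mem_map (Option.some_injective _)]
  · simp only [some_mem_insert_none_collapsedSet]
  · rintro (_ | a) ha
    · exact absurd (Set.mem_insert _ _) ha
    · exact ⟨a, rfl⟩

lemma firstEntrance_eq_tsum_subtype (hBF : B ⊆ F) (k : E → E → ℝ≥0∞) (a b : E) :
    firstEntrance k a F b =
      ∑' l : List {η : E // η ∉ B}, if ∀ c ∈ l, c.1 ∉ F then chainWeight k a (l.map Subtype.val) b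
        else 0 :=
  tsum_ite_forall_mem_map Subtype.val_injective (P := (· ∉ F))
    (fun x hx => ⟨⟨x, fun h => hx (hBF h)⟩, rfl⟩) _

lemma firstEntrance_collapsedRate_some_some (hBF : B ⊆ F) (a b : {η : E // η ∉ B}) :
    firstEntrance (jumpKernel (collapsedRate R μ B)) (some a) (insert none (collapsedSet B F))
      (some b) = firstEntrance (jumpKernel R) a F b := by
  simp only [firstEntrance_collapsedSet, firstEntrance_eq_tsum_subtype hBF,
    chainWeight_collapsedRate_some_some]

lemma firstEntrance_collapsedRate_some_none (hR : IsRateMatrix R) (hBF : B ⊆ F)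
    (a : {η : E // η ∉ B}) :
    firstEntrance (jumpKernel (collapsedRate R μ B)) (some a) (insert none (collapsedSet B F))
      none = ∑' ζ : B, firstEntrance (jumpKernel R) a F ζ := by
  simp only [firstEntrance_collapsedSet, firstEntrance_eq_tsum_subtype hBF,
    chainWeight_collapsedRate_some_none hR]
  rw [ENNReal.tsum_comm]
  refine tsum_congr fun l => ?_
  split_ifs <;> simp

lemma ofReal_mul_firstEntrance_collapsedRate_none_some (hR : IsRateMatrix R)
    (hμ : IsStationaryRate R μ) (hBF : B ⊆ F) (b : {η : E // η ∉ B}) :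
    ENNReal.ofReal (-collapsedRate R μ B none none) *
        firstEntrance (jumpKernel (collapsedRate R μ B)) none (insert none (collapsedSet B F))
          (some b)
      = ENNReal.ofReal (∑' ζ : B, μ ζ)⁻¹ * ∑' ζ : B,
          ENNReal.ofReal (μ ζ * -R ζ ζ) * firstEntrance (jumpKernel R) ζ F b := by
  simp only [firstEntrance_collapsedSet, firstEntrance_eq_tsum_subtype hBF,
    ← ENNReal.tsum_mul_left]
  rw [ENNReal.tsum_comm]
  refine tsum_congr fun l => ?_
  split_ifs
  · simp only [ofReal_mul_chainWeight_collapsedRate_none_some hR hμ, ENNReal.tsum_mul_left]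
  · simp

lemma retProb_collapsedRate_singleton (hR : IsRateMatrix R) (hμ : IsStationaryRate R μ)
    (u : Option {η : E // η ∉ B}) (S : Set (Option {η : E // η ∉ B}))
    (v : Option {η : E // η ∉ B}) :
    retProb (jumpProb (collapsedRate R μ B)) u S {v} =
      (firstEntrance (jumpKernel (collapsedRate R μ B)) u S v).toReal :=
  retProb_singleton (jumpProb_nonneg_of (fun _ _ => collapsedRate_nonneg hR hμ)
    (collapsedRate_diag_nonpos hR hμ)) u S v

lemma traceOfCollapsedRate_some_some (hR : IsRateMatrix R) (hμ : IsStationaryRate R μ)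
    (hBF : B ⊆ F) (a b : {η : E // η ∉ B}) :
    traceOfCollapsedRate R μ B F (some a) (some b) = traceRate R F a b := by
  rw [traceOfCollapsedRate, traceRate, retProb_collapsedRate_singleton hR hμ,
    firstEntrance_collapsedRate_some_some hBF, hR.retProb_singleton]
  rfl

lemma traceOfCollapsedRate_some_none (hR : IsRateMatrix R) (hμ : IsStationaryRate R μ)
    (hBF : B ⊆ F) (a : {η : E // η ∉ B}) :
    traceOfCollapsedRate R μ B F (some a) none = ∑' ζ : B, traceRate R F a ζ := by
  rw [traceOfCollapsedRate, retProb_collapsedRate_singleton hR hμ,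
    firstEntrance_collapsedRate_some_none hR hBF,
    ENNReal.tsum_toReal_eq fun ζ => hR.firstEntrance_ne_top (hBF ζ.2) a, ← tsum_mul_left]
  refine tsum_congr fun ζ => ?_
  rw [traceRate, hR.retProb_singleton]
  rfl

lemma traceOfCollapsedRate_none_some (hR : IsRateMatrix R) (hμ : IsStationaryRate R μ)
    (hBF : B ⊆ F) (b : {η : E // η ∉ B}) (hb : b.1 ∈ F) :
    traceOfCollapsedRate R μ B F none (some b) = (∑' ζ : B, μ ζ)⁻¹ *
      ∑' ζ : B, μ ζ * (-R ζ ζ) * retProb (jumpProb R) ζ F {b.1} := by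
  have hdiag := neg_nonneg.2 (collapsedRate_diag_nonpos hR hμ (B := B) none)
  rw [traceOfCollapsedRate, retProb_collapsedRate_singleton hR hμ, ← ENNReal.toReal_ofReal hdiag,
    ← ENNReal.toReal_mul, ofReal_mul_firstEntrance_collapsedRate_none_some hR hμ hBF,
    ENNReal.toReal_mul, ENNReal.toReal_ofReal (hμ.inv_tsum_subtype_nonneg B),
    ENNReal.tsum_toReal_eq fun ζ : B => mul_ne_top ofReal_ne_top (hR.firstEntrance_ne_top hb ζ)]
  congr 1
  refine tsum_congr fun ζ => ?_
  rw [ENNReal.toReal_mul, ENNReal.toReal_ofReal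
    (mul_nonneg (hμ.pos ζ).le (neg_nonneg.2 (hR.diag_neg ζ).le)), hR.retProb_singleton]

end Collapsed

theorem stmt9_general {E : Type*} (R : E → E → ℝ) (μ : E → ℝ)
    (hR : IsRateMatrix R) (hμ : IsStationaryRate R μ)
    (B F : Set E) (hBF : B ⊆ F) :
    (∀ u v : Option {η : E // η ∉ B},
      u ∈ insert none (collapsedSet B F) → v ∈ insert none (collapsedSet B F) → u ≠ v →
        traceOfCollapsedRate R μ B F u v = collapsedTraceRate R μ B F u v)
    ∧ ∀ η : {η : E // η ∉ B}, η.1 ∈ F →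
        traceOfCollapsedRate R μ B F none (some η)
          = (∑' ζ : B, μ ζ.1)⁻¹ *
              ∑' ζ : B, μ ζ.1 * (-R ζ.1 ζ.1) * retProb (jumpProb R) ζ.1 F {η.1}
        ∧ traceOfCollapsedRate R μ B F none (some η)
            = collapsedTraceRate R μ B F none (some η) := by
  have none_some : ∀ η : {η : E // η ∉ B}, η.1 ∈ F →
      traceOfCollapsedRate R μ B F none (some η) = collapsedTraceRate R μ B F none (some η) := by
    intro η hη
    rw [traceOfCollapsedRate_none_some hR hμ hBF η hη, collapsedTraceRate]
    simp only [traceRate, mul_assoc]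
  refine ⟨?_, fun η hη => ⟨traceOfCollapsedRate_none_some hR hμ hBF η hη, none_some η hη⟩⟩
  rintro (_ | ξ) (_ | ζ) - hv hne
  · exact absurd rfl hne
  · exact none_some ζ (some_mem_insert_none_collapsedSet.1 hv)
  · exact traceOfCollapsedRate_some_none hR hμ hBF ξ
  · exact traceOfCollapsedRate_some_some hR hμ hBF ξ ζ

/-- Lemma 4.2: for nonempty `B ⊂ F ⊆ E` with `B ≠ F` and `F ≠ E`, the trace on
`G = (F∖B) ∪ {𝔡}` of the chain collapsed at `B` has the same jump rates as the collapse at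
`B` of the trace on `F`; in particular, for `η ∈ F∖B`,
`R_{TC}(𝔡,η) = μ(B)^{-1} Σ_{ζ∈B} μ(ζ)λ(ζ) P_ζ[ℍ⁺_F < ∞ and Y_{ℍ⁺_F} = η] = R_{CT}(𝔡,η)`;
hence the two processes have the same law. -/
theorem stmt9 {E : Type*} [Countable E] (R : E → E → ℝ) (μ : E → ℝ)
    (hR : IsRateMatrix R) (hirr : MCIrreducible (jumpProb R)) (hμ : IsStationaryRate R μ)
    (B F : Set E) (hBF : B ⊆ F) (hB : B.Nonempty) (hBne : B ≠ F) (hF : F ≠ Set.univ) :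
    (∀ u v : Option {η : E // η ∉ B},
      u ∈ insert none (collapsedSet B F) → v ∈ insert none (collapsedSet B F) → u ≠ v →
        traceOfCollapsedRate R μ B F u v = collapsedTraceRate R μ B F u v)
    ∧ ∀ η : {η : E // η ∉ B}, η.1 ∈ F →
        traceOfCollapsedRate R μ B F none (some η)
          = (∑' ζ : B, μ ζ.1)⁻¹ *
              ∑' ζ : B, μ ζ.1 * (-R ζ.1 ζ.1) * retProb (jumpProb R) ζ.1 F {η.1}
        ∧ traceOfCollapsedRate R μ B F none (some η)
            = collapsedTraceRate R μ B F none (some η) :=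
  stmt9_general R μ hR hμ B F hBF
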